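/- Let d ≥ 1, let σ²: Fin d → ℝ≥0, let μ be the product measure on ℝ^d whose i-th coordinate is the centered real Gaussian measure with variance σᵢ², let ε > 0, and let w* ∈ ℝ^d. Define the robust standard risk minimizer w^R ∈ ℝ^d by w^R_i = w*_i if σᵢ² > 0 and w^R_i = 0 otherwise. Then for every w ∈ ℝ^d with wᵢ = w*ᵢ for all i with σᵢ² > 0, one has R_a(w) = (ε²/2)·‖w‖₂² ≥ (ε²/2)·‖w^R‖₂² = R_a(w^R), with equality if and only if w = w^R; that is, w^R is the unique minimizer of the adversarial risk among all standard risk minimizers. -/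

import Mathlib

open MeasureTheory ProbabilityTheory
open scoped NNReal

/-- The adversarial risk under the product Gaussian measure. -/
noncomputable def advRisk (d : ℕ) (σsq : Fin d → ℝ≥0) (wstar : Fin d → ℝ) (ε : ℝ)
    (w : Fin d → ℝ) : ℝ :=
  ∫ x : Fin d → ℝ,
      sSup ((fun (Δ : Fin d → ℝ) =>
          (1/2) * ((∑ i, x i * (w i - wstar i)) + ∑ i, Δ i * w i)^2) ''
        {Δ | Real.sqrt (∑ i, (Δ i)^2) ≤ ε})
      ∂(Measure.pi fun i => gaussianReal 0 (σsq i))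

/-! A standard risk minimizer has `⟨x, w - w*⟩ = 0` almost surely, so only the
adversarial term survives; its worst case over the `ε`-ball is `ε‖w‖₂` by Cauchy–Schwarz,
attained at `Δ = ε w / ‖w‖₂`. Among the standard risk minimizers the free coordinates
only add to `‖w‖₂²`, so setting them to zero is the unique optimum. -/

section

variable {ι : Type*} [Fintype ι]

theorem isGreatest_half_sq_inner_ball (w : ι → ℝ) {ε : ℝ} (hε : 0 ≤ ε) :
    IsGreatest ((fun Δ : ι → ℝ => (1/2) * (∑ i, Δ i * w i)^2) ''
        {Δ | Real.sqrt (∑ i, (Δ i)^2) ≤ ε})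
      (ε^2 / 2 * ∑ i, (w i)^2) := by
  set S := ∑ i, (w i)^2 with hS_def
  have hS : 0 ≤ S := Finset.sum_nonneg fun i _ => sq_nonneg _
  refine ⟨?_, ?_⟩
  · rcases hS.eq_or_lt with hS0 | hS0
    · exact ⟨0, by simp [hε], by simp [← hS0]⟩
    · set c := ε / Real.sqrt S
      have hc : c^2 * S = ε^2 := by
        rw [div_pow, Real.sq_sqrt hS, div_mul_cancel₀ _ hS0.ne']
      refine ⟨fun i => c * w i, ?_, ?_⟩
      · simp only [Set.mem_ofPred_eq, mul_pow, ← Finset.mul_sum, ← hS_def, hc,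
          Real.sqrt_sq hε, le_refl]
      · simp only [mul_assoc, ← Finset.mul_sum, ← sq, ← hS_def]
        linear_combination (S / 2) * hc
  · rintro _ ⟨Δ, hΔ, rfl⟩
    have hΔ2 : ∑ i, (Δ i)^2 ≤ ε^2 := (Real.sqrt_le_left hε).mp hΔ
    have cauchy_schwarz := Finset.sum_mul_sq_le_sq_mul_sq Finset.univ Δ w
    nlinarith [mul_le_mul_of_nonneg_right hΔ2 hS]

theorem sum_sq_ite_le (p : ι → Prop) [DecidablePred p] (w : ι → ℝ) :
    ∑ i, (if p i then w i else 0)^2 ≤ ∑ i, (w i)^2 :=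
  Finset.sum_le_sum fun i _ => by split_ifs <;> simp [sq_nonneg]

theorem sum_sq_ite_eq_iff (p : ι → Prop) [DecidablePred p] (w : ι → ℝ) :
    ∑ i, (if p i then w i else 0)^2 = ∑ i, (w i)^2 ↔
      (fun i => if p i then w i else 0) = w := by
  rw [Finset.sum_eq_sum_iff_of_le fun i _ => by split_ifs <;> simp [sq_nonneg], funext_iff]
  refine forall_congr' fun i => ?_
  split_ifs <;> simp [eq_comm]

theorem ae_eval_eq_zero_of_variance_eq_zero {σsq : ι → ℝ≥0} {i : ι} (hi : σsq i = 0) :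
    ∀ᵐ x ∂(Measure.pi fun j => gaussianReal 0 (σsq j)), x i = 0 :=
  (Measure.tendsto_eval_ae_ae (μ := fun j => gaussianReal 0 (σsq j))).eventually
    (p := fun y => y = 0) <| by
    rw [hi, gaussianReal_zero_var, ae_dirac_eq]
    exact Filter.eventually_pure.mpr rfl

theorem ae_sum_mul_sub_eq_zero {σsq : ι → ℝ≥0} {w wstar : ι → ℝ}
    (hw : ∀ i, 0 < σsq i → w i = wstar i) :
    ∀ᵐ x ∂(Measure.pi fun j => gaussianReal 0 (σsq j)),
      ∑ i, x i * (w i - wstar i) = 0 := by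
  have h_term : ∀ i, ∀ᵐ x ∂(Measure.pi fun j => gaussianReal 0 (σsq j)),
      x i * (w i - wstar i) = 0 := fun i => by
    rcases eq_zero_or_pos (σsq i) with hi | hi
    · filter_upwards [ae_eval_eq_zero_of_variance_eq_zero hi] with x hx
      rw [hx, zero_mul]
    · exact .of_forall fun x => by rw [hw i hi, sub_self, mul_zero]
  filter_upwards [ae_all_iff.mpr h_term] with x hx using Finset.sum_eq_zero fun i _ => hx i

end

theorem advRisk_eq_of_standard {d : ℕ} {σsq : Fin d → ℝ≥0} {ε : ℝ} (hε : 0 ≤ ε)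
    {wstar w : Fin d → ℝ} (hw : ∀ i, 0 < σsq i → w i = wstar i) :
    advRisk d σsq wstar ε w = ε^2 / 2 * ∑ i, (w i)^2 := by
  have h_sup : ∀ᵐ x ∂(Measure.pi fun j => gaussianReal 0 (σsq j)),
      sSup ((fun Δ : Fin d → ℝ =>
          (1/2) * ((∑ i, x i * (w i - wstar i)) + ∑ i, Δ i * w i)^2) ''
        {Δ | Real.sqrt (∑ i, (Δ i)^2) ≤ ε}) = ε^2 / 2 * ∑ i, (w i)^2 := by
    filter_upwards [ae_sum_mul_sub_eq_zero hw] with x hx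
    simp only [hx, zero_add]
    exact (isGreatest_half_sq_inner_ball w hε).csSup_eq
  rw [advRisk, integral_congr_ae h_sup]
  simp

theorem robust_minimizer_unique_general (d : ℕ)
    (σsq : Fin d → ℝ≥0) (ε : ℝ) (hε : 0 < ε) (wstar : Fin d → ℝ)
    (wR : Fin d → ℝ) (hwR : ∀ i, wR i = if 0 < σsq i then wstar i else 0) :
    ∀ w : Fin d → ℝ, (∀ i, 0 < σsq i → w i = wstar i) →
      advRisk d σsq wstar ε w = ε^2 / 2 * ∑ i, (w i)^2 ∧
      advRisk d σsq wstar ε wR = ε^2 / 2 * ∑ i, (wR i)^2 ∧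
      ε^2 / 2 * ∑ i, (wR i)^2 ≤ ε^2 / 2 * ∑ i, (w i)^2 ∧
      (advRisk d σsq wstar ε w = advRisk d σsq wstar ε wR ↔ w = wR) := by
  intro w hw
  have hwR_std : ∀ i, 0 < σsq i → wR i = wstar i := fun i hi => by rw [hwR i, if_pos hi]
  have hwR_eq : wR = fun i => if 0 < σsq i then w i else 0 := by
    funext i
    split_ifs with hi
    · rw [hwR_std i hi, hw i hi]
    · rw [hwR i, if_neg hi]
  have hc : 0 < ε^2 / 2 := by positivity
  rw [advRisk_eq_of_standard hε.le hw, advRisk_eq_of_standard hε.le hwR_std, hwR_eq]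
  refine ⟨rfl, rfl, mul_le_mul_of_nonneg_left (sum_sq_ite_le _ w) hc.le, ?_⟩
  rw [mul_right_inj' hc.ne', eq_comm, eq_comm (a := w)]
  exact sum_sq_ite_eq_iff _ w

/-- The robust standard risk minimizer `w^R` (equal to `w*` on relevant
frequencies and `0` elsewhere) is the unique minimizer of the adversarial risk
among all standard risk minimizers, whose adversarial risks are `(ε²/2)‖·‖₂²`. -/
theorem robust_minimizer_unique (d : ℕ) (hd : 1 ≤ d)
    (σsq : Fin d → ℝ≥0) (ε : ℝ) (hε : 0 < ε) (wstar : Fin d → ℝ)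
    (wR : Fin d → ℝ) (hwR : ∀ i, wR i = if 0 < σsq i then wstar i else 0) :
    ∀ w : Fin d → ℝ, (∀ i, 0 < σsq i → w i = wstar i) →
      advRisk d σsq wstar ε w = ε^2 / 2 * ∑ i, (w i)^2 ∧
      advRisk d σsq wstar ε wR = ε^2 / 2 * ∑ i, (wR i)^2 ∧
      ε^2 / 2 * ∑ i, (wR i)^2 ≤ ε^2 / 2 * ∑ i, (w i)^2 ∧
      (advRisk d σsq wstar ε w = advRisk d σsq wstar ε wR ↔ w = wR) :=
  robust_minimizer_unique_general d σsq ε hε wstar wR hwR
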